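/- Let k ≥ 2 and suppose t is an integer such that every digraph H with no half-integral packing of k−1 directed odd cycles has a set of at most t vertices meeting all directed odd cycles. Let G be a digraph with no half-integral packing of k directed odd cycles, and let T be a minimum-size set of vertices meeting all directed odd cycles of G. Then T is 2t-well-linked in G. -/

import Mathlib

variable {V : Type}

/-- `w` is a directed walk of length `n` in the digraph with edge relation `R`. -/
def IsWalkOn (R : V → V → Prop) (w : ℕ → V) (n : ℕ) : Prop :=
  ∀ i < n, R (w i) (w (i + 1))

/-- The set of vertices used by the walk `w` of length `n`. -/
def walkVerts (w : ℕ → V) (n : ℕ) : Set V :=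
  {v | ∃ i ≤ n, w i = v}

/-- The set of directed edges used by the walk `w` of length `n`. -/
def walkEdges (w : ℕ → V) (n : ℕ) : Set (V × V) :=
  {e | ∃ i < n, w i = e.1 ∧ w (i + 1) = e.2}

/-- A directed path: a walk with no repeated vertices. -/
def IsPathOn (R : V → V → Prop) (w : ℕ → V) (n : ℕ) : Prop :=
  IsWalkOn R w n ∧ ∀ i ≤ n, ∀ j ≤ n, w i = w j → i = j

/-- A directed cycle of length `n`: a closed walk with no repeated vertices
except that the last vertex equals the first. -/
def IsCycleOn (R : V → V → Prop) (w : ℕ → V) (n : ℕ) : Prop :=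
  0 < n ∧ IsWalkOn R w n ∧ w n = w 0 ∧ ∀ i < n, ∀ j < n, w i = w j → i = j

/-- `v` is reachable from `u` by a directed walk all of whose vertices lie in `S`. -/
def ReachIn (R : V → V → Prop) (S : Set V) (u v : V) : Prop :=
  ∃ w n, IsWalkOn R w n ∧ w 0 = u ∧ w n = v ∧ ∀ i ≤ n, w i ∈ S

/-- Every two vertices of `C` are mutually reachable inside `S`. -/
def StrongIn (R : V → V → Prop) (S C : Set V) : Prop :=
  ∀ u ∈ C, ∀ v ∈ C, ReachIn R S u v

/-- `C` is a strongly connected component of the subgraph induced on `S`. -/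
def IsSCCOf (R : V → V → Prop) (S C : Set V) : Prop :=
  C.Nonempty ∧ C ⊆ S ∧ StrongIn R S C ∧
    ∀ C', C ⊆ C' → C' ⊆ S → StrongIn R S C' → C' = C

/-- A directed `X`-walk: endpoints in `X`, all internal vertices outside `X`. -/
def IsXWalk (R : V → V → Prop) (X : Set V) (w : ℕ → V) (n : ℕ) : Prop :=
  IsWalkOn R w n ∧ w 0 ∈ X ∧ w n ∈ X ∧ ∀ i, 0 < i → i < n → w i ∉ X

/-- `S` meets every directed odd cycle. -/
def HitsOdd (R : V → V → Prop) (S : Set V) : Prop :=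
  ∀ c m, IsCycleOn R c m → Odd m → ∃ i < m, c i ∈ S

/-- `S` meets every directed odd cycle of the subgraph induced on `W`. -/
def HitsOddIn (R : V → V → Prop) (S W : Set V) : Prop :=
  ∀ c m, IsCycleOn R c m → Odd m → walkVerts c m ⊆ W → ∃ i < m, c i ∈ S

/-- A half-integral packing of `k` directed odd cycles: every vertex lies in at most
two of the `k` cycles. -/
def HalfPackOdd (R : V → V → Prop) (k : ℕ) : Prop :=
  ∃ (c : Fin k → ℕ → V) (len : Fin k → ℕ),
    (∀ i, IsCycleOn R (c i) (len i) ∧ Odd (len i)) ∧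
    ∀ v, {i | v ∈ walkVerts (c i) (len i)}.ncard ≤ 2

/-- A linkage of order `s` from `A` to `B` avoiding `Z`: `s` pairwise vertex-disjoint
directed paths from `A` to `B`, none of which meets `Z`. -/
def ExLinkage (R : V → V → Prop) (A B Z : Set V) (s : ℕ) : Prop :=
  ∃ (P : Fin s → ℕ → V) (len : Fin s → ℕ),
    (∀ i, IsPathOn R (P i) (len i) ∧ P i 0 ∈ A ∧ P i (len i) ∈ B ∧
      Disjoint (walkVerts (P i) (len i)) Z) ∧
    ∀ i j, i ≠ j → Disjoint (walkVerts (P i) (len i)) (walkVerts (P j) (len j))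

/-- `T` is `r`-well-linked: for all disjoint equal-size subsets `A, B ⊆ T` of size at
least `r`, there are linkages of order `|A|` from `A` to `B` and from `B` to `A` in
`G - (T \ (A ∪ B))`. -/
def WellLinked (R : V → V → Prop) (T : Finset V) (r : ℕ) : Prop :=
  ∀ A B : Finset V, A ⊆ T → B ⊆ T → Disjoint A B → A.card = B.card → r ≤ A.card →
    ExLinkage R (↑A) (↑B) ((↑T : Set V) \ (↑A ∪ ↑B)) A.card ∧
    ExLinkage R (↑B) (↑A) ((↑T : Set V) \ (↑A ∪ ↑B)) A.card

/-- `S` is `k`-linked: for every vertex set `X` with `|X| < k`, there is a unique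
strongly connected component of `G - X` containing more than half of the vertices
of `S`. -/
def KLinked (R : V → V → Prop) (S : Finset V) (k : ℕ) : Prop :=
  ∀ X : Finset V, X.card < k →
    ∃! C : Set V, IsSCCOf R ((↑X : Set V)ᶜ) C ∧ S.card < 2 * ((↑S : Set V) ∩ C).ncard

/-- A bramble: a family of (vertex sets of) strongly connected subgraphs which
pairwise either intersect or are joined by edges in both directions. -/
def IsBramble (R : V → V → Prop) (B : Set (Set V)) : Prop :=
  (∀ C ∈ B, C.Nonempty ∧ StrongIn R C C) ∧
  ∀ C₁ ∈ B, ∀ C₂ ∈ B, (C₁ ∩ C₂).Nonempty ∨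
    ((∃ u ∈ C₁, ∃ v ∈ C₂, R u v) ∧ (∃ u ∈ C₂, ∃ v ∈ C₁, R u v))

/-- A walk in the underlying undirected graph of the digraph with edge relation `R`. -/
def IsUWalkOn (R : V → V → Prop) (w : ℕ → V) (n : ℕ) : Prop :=
  ∀ i < n, R (w i) (w (i + 1)) ∨ R (w (i + 1)) (w i)

/-- A separation `(C, D)` of a digraph: `C ∪ D = V` and there is no edge from
`C \ D` to `D \ C`. -/
def IsSeparation (R : V → V → Prop) (C D : Set V) : Prop :=
  C ∪ D = Set.univ ∧ ∀ u ∈ C \ D, ∀ v ∈ D \ C, ¬ R u v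

/-!
If the linkage fails, Menger's theorem (for finite terminal sets, via compactness) gives a
separator `X` with `|X| < |A|` in `G - (T \ (A ∪ B))`. Outside `(T \ (A ∪ B)) ∪ X` the vertices
split into those reachable from `A`, which include no vertex of `B`, and the rest, which include
no vertex of `A`, and every odd cycle avoiding `(T \ (A ∪ B)) ∪ X` lies on one side. If one
side holds a half-integral packing of `k - 1` odd cycles, the other side has no odd cycle, and
replacing `B` (resp. `A`) by `X` in `T` gives a smaller hitting set. Otherwise both sides have
hitting sets of size at most `t`, and replacing `A ∪ B` by `X` and these two sets gives one of
size less than `|T| - 2|A| + |A| + 2t ≤ |T|`.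
-/

open Finset

section Walks

variable {R R' : V → V → Prop} {w : ℕ → V} {n m : ℕ}

theorem IsWalkOn.mono (h : ∀ u v, R u v → R' u v) (hw : IsWalkOn R w n) : IsWalkOn R' w n :=
  fun i hi => h _ _ (hw i hi)

theorem IsPathOn.mono (h : ∀ u v, R u v → R' u v) (hw : IsPathOn R w n) : IsPathOn R' w n :=
  ⟨hw.1.mono h, hw.2⟩

theorem mem_walkVerts_of_le {i : ℕ} (hi : i ≤ n) : w i ∈ walkVerts w n := ⟨i, hi, rfl⟩

theorem walkVerts_mono (hm : m ≤ n) : walkVerts w m ⊆ walkVerts w n :=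
  fun _ ⟨i, hi, hv⟩ => ⟨i, hi.trans hm, hv⟩

theorem walkVerts_zero : walkVerts w 0 = {w 0} := by
  ext v
  simp [walkVerts, eq_comm]

theorem walkVerts_drop_subset (hm : m ≤ n) :
    walkVerts (fun i => w (i + m)) (n - m) ⊆ walkVerts w n := by
  rintro _ ⟨i, hi, rfl⟩
  exact ⟨i + m, by omega, rfl⟩

theorem IsWalkOn.take (h : IsWalkOn R w n) (hm : m ≤ n) : IsWalkOn R w m :=
  fun i hi => h i (by omega)

theorem IsWalkOn.drop (h : IsWalkOn R w n) (m : ℕ) : IsWalkOn R (fun i => w (i + m)) (n - m) :=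
  fun i hi => by simpa only [Nat.add_right_comm i 1 m] using h (i + m) (by omega)

theorem IsPathOn.take (h : IsPathOn R w n) (hm : m ≤ n) : IsPathOn R w m :=
  ⟨h.1.take hm, fun i hi j hj => h.2 i (hi.trans hm) j (hj.trans hm)⟩

theorem IsPathOn.drop (h : IsPathOn R w n) (hm : m ≤ n) :
    IsPathOn R (fun i => w (i + m)) (n - m) :=
  ⟨h.1.drop m, fun i hi j hj hij => by have := h.2 (i + m) (by omega) (j + m) (by omega) hij; omega⟩

/-- Concatenation at a shared vertex: `w₂ 0` is meant to be `w₁ n₁`. -/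
def walkAppend (w₁ : ℕ → V) (n₁ : ℕ) (w₂ : ℕ → V) : ℕ → V :=
  fun i => if i ≤ n₁ then w₁ i else w₂ (i - n₁)

section Append

variable {w₁ w₂ : ℕ → V} {n₁ n₂ : ℕ}

theorem walkAppend_of_le {i : ℕ} (h : i ≤ n₁) : walkAppend w₁ n₁ w₂ i = w₁ i := if_pos h

theorem walkAppend_add (hj : w₁ n₁ = w₂ 0) (i : ℕ) : walkAppend w₁ n₁ w₂ (n₁ + i) = w₂ i := by
  unfold walkAppend
  split_ifs with h
  · obtain rfl : i = 0 := by omega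
    simpa using hj
  · simp

theorem walkAppend_zero : walkAppend w₁ n₁ w₂ 0 = w₁ 0 := walkAppend_of_le n₁.zero_le

theorem IsWalkOn.append (h₁ : IsWalkOn R w₁ n₁) (h₂ : IsWalkOn R w₂ n₂) (hj : w₁ n₁ = w₂ 0) :
    IsWalkOn R (walkAppend w₁ n₁ w₂) (n₁ + n₂) := by
  intro i hi
  by_cases hin : i < n₁
  · rw [walkAppend_of_le hin.le, walkAppend_of_le hin]
    exact h₁ i hin
  · obtain ⟨l, rfl⟩ := Nat.exists_eq_add_of_le (not_lt.mp hin)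
    rw [walkAppend_add hj, add_assoc, walkAppend_add hj]
    exact h₂ l (by omega)

theorem walkVerts_append_subset :
    walkVerts (walkAppend w₁ n₁ w₂) (n₁ + n₂) ⊆ walkVerts w₁ n₁ ∪ walkVerts w₂ n₂ := by
  rintro _ ⟨i, hi, rfl⟩
  unfold walkAppend
  split_ifs with h
  · exact Or.inl (mem_walkVerts_of_le h)
  · exact Or.inr (mem_walkVerts_of_le (by omega))

theorem IsPathOn.append (h₁ : IsPathOn R w₁ n₁) (h₂ : IsPathOn R w₂ n₂) (hj : w₁ n₁ = w₂ 0)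
    (hmeet : ∀ v ∈ walkVerts w₁ n₁, v ∈ walkVerts w₂ n₂ → v = w₁ n₁) :
    IsPathOn R (walkAppend w₁ n₁ w₂) (n₁ + n₂) := by
  refine ⟨h₁.1.append h₂.1 hj, ?_⟩
  have cross : ∀ i j, i ≤ n₁ → j ≤ n₂ → w₁ i = w₂ j → i = n₁ ∧ j = 0 := by
    intro i j hi hj' heq
    have hjun := hmeet _ (mem_walkVerts_of_le hi) (heq ▸ mem_walkVerts_of_le hj')
    refine ⟨h₁.2 i hi n₁ le_rfl hjun, h₂.2 j hj' 0 (Nat.zero_le _) ?_⟩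
    rw [← heq, hjun, hj]
  intro i hi j hj' heq
  unfold walkAppend at heq
  split_ifs at heq with h₁i h₁j h₁j
  · exact h₁.2 i h₁i j h₁j heq
  · have := cross i (j - n₁) h₁i (by omega) heq; omega
  · have := cross j (i - n₁) h₁j (by omega) heq.symm; omega
  · have := h₂.2 (i - n₁) (by omega) (j - n₁) (by omega) heq; omega

end Append

def edgeWalk (u v : V) : ℕ → V := fun i => if i = 0 then u else v

theorem isWalkOn_edgeWalk {u v : V} (h : R u v) : IsWalkOn R (edgeWalk u v) 1 := by
  intro i hi
  obtain rfl : i = 0 := by omega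
  simpa [edgeWalk] using h

theorem walkVerts_edgeWalk {u v : V} : walkVerts (edgeWalk u v) 1 = {u, v} := by
  ext x
  simp only [walkVerts, edgeWalk]
  constructor
  · rintro ⟨i, hi, rfl⟩
    split_ifs <;> simp
  · rintro (rfl | rfl)
    · exact ⟨0, by simp⟩
    · exact ⟨1, by simp⟩

theorem isPathOn_edgeWalk {u v : V} (h : R u v) (hne : u ≠ v) : IsPathOn R (edgeWalk u v) 1 := by
  refine ⟨isWalkOn_edgeWalk h, fun i hi j hj heq => ?_⟩
  interval_cases i <;> interval_cases j <;> simp_all [edgeWalk]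

theorem IsWalkOn.exists_isPathOn (hw : IsWalkOn R w n) :
    ∃ w' n', IsPathOn R w' n' ∧ w' 0 = w 0 ∧ w' n' = w n ∧ walkVerts w' n' ⊆ walkVerts w n := by
  induction n using Nat.strong_induction_on generalizing w with
  | _ n IH =>
  by_cases hinj : ∀ i ≤ n, ∀ j ≤ n, w i = w j → i = j
  · exact ⟨w, n, ⟨hw, hinj⟩, rfl, rfl, subset_rfl⟩
  simp only [not_forall] at hinj
  obtain ⟨i, hi, j, hj, heq, hne⟩ := hinj
  wlog hij : i < j generalizing i j
  · exact this j hj i hi heq.symm (Ne.symm hne) (by omega)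
  -- cut out the closed subwalk between positions `i` and `j`
  have hjoin : w i = (fun l => w (l + j)) 0 := by simpa using heq
  obtain ⟨w', n', hp, h0, hend, hsub⟩ :=
    IH (i + (n - j)) (by omega) ((hw.take hi).append (hw.drop j) hjoin)
  refine ⟨w', n', hp, by rw [h0, walkAppend_zero], ?_, ?_⟩
  · rw [hend, walkAppend_add hjoin]
    simp only [Nat.sub_add_cancel hj]
  · refine hsub.trans (walkVerts_append_subset.trans (Set.union_subset ?_ ?_))
    · exact walkVerts_mono hi
    · exact walkVerts_drop_subset hj

end Walks

section Linkage

variable {R R' : V → V → Prop} {A B : Set V} {s : ℕ}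

def IsLinkage (R : V → V → Prop) (A B : Set V) (P : Fin s → ℕ → V) (len : Fin s → ℕ) : Prop :=
  (∀ i, IsPathOn R (P i) (len i) ∧ P i 0 ∈ A ∧ P i (len i) ∈ B) ∧
    ∀ i j, i ≠ j → Disjoint (walkVerts (P i) (len i)) (walkVerts (P j) (len j))

def Separates (R : V → V → Prop) (A B X : Set V) : Prop :=
  ∀ w n, IsPathOn R w n → w 0 ∈ A → w n ∈ B → ∃ i ≤ n, w i ∈ X

theorem IsLinkage.mono (h : ∀ u v, R u v → R' u v) {P : Fin s → ℕ → V} {len : Fin s → ℕ}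
    (hP : IsLinkage R A B P len) : IsLinkage R' A B P len :=
  ⟨fun i => ⟨(hP.1 i).1.mono h, (hP.1 i).2⟩, hP.2⟩

theorem IsLinkage.exLinkage {P : Fin s → ℕ → V} {len : Fin s → ℕ}
    (hP : IsLinkage R A B P len) : ExLinkage R A B ∅ s :=
  ⟨P, len, fun i => ⟨(hP.1 i).1, (hP.1 i).2.1, (hP.1 i).2.2, Set.disjoint_empty _⟩, hP.2⟩

theorem IsLinkage.eq_of_mem_of_mem {P : Fin s → ℕ → V} {len : Fin s → ℕ}
    (hP : IsLinkage R A B P len) {i j : Fin s} {v : V} (hi : v ∈ walkVerts (P i) (len i))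
    (hj : v ∈ walkVerts (P j) (len j)) : i = j := by
  by_contra hne
  exact Set.disjoint_left.mp (hP.2 i j hne) hi hj

theorem IsLinkage.start_injective {P : Fin s → ℕ → V} {len : Fin s → ℕ}
    (hP : IsLinkage R A B P len) : Function.Injective fun i => P i 0 := fun i j h =>
  hP.eq_of_mem_of_mem (mem_walkVerts_of_le (Nat.zero_le _))
    (by rw [show P i 0 = P j 0 from h]; exact mem_walkVerts_of_le (Nat.zero_le _))

theorem IsLinkage.end_injective {P : Fin s → ℕ → V} {len : Fin s → ℕ}
    (hP : IsLinkage R A B P len) : Function.Injective fun i => P i (len i) := fun i j h =>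
  hP.eq_of_mem_of_mem (mem_walkVerts_of_le le_rfl)
    (by rw [show P i (len i) = P j (len j) from h]; exact mem_walkVerts_of_le le_rfl)

theorem exists_eq_of_injective_of_card_le {f : Fin s → V} (hf : Function.Injective f)
    {M : Finset V} (hfM : ∀ i, f i ∈ M) (hM : #M ≤ s) (v : V) (hv : v ∈ M) : ∃ i, f i = v := by
  obtain ⟨i, -, hi⟩ := Finset.surj_on_of_inj_on_of_card_le (s := Finset.univ) (fun i _ => f i)
    (fun i _ => hfM i) (fun i j _ _ h => hf h) (by simpa using hM) v hv
  exact ⟨i, hi.symm⟩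

theorem IsLinkage.append {M : Finset V} (hM : #M ≤ s) {P Q : Fin s → ℕ → V}
    {lP lQ : Fin s → ℕ} (hP : IsLinkage R A M P lP) (hQ : IsLinkage R M B Q lQ)
    (hmeet : ∀ i j v, v ∈ walkVerts (P i) (lP i) → v ∈ walkVerts (Q j) (lQ j) →
      v = P i (lP i) ∧ v = Q j 0) :
    ∃ (P' : Fin s → ℕ → V) (len : Fin s → ℕ), IsLinkage R A B P' len := by
  choose σ hσ using fun i =>
    exists_eq_of_injective_of_card_le hQ.start_injective (fun j => (hQ.1 j).2.1) hM _ (hP.1 i).2.2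
  have hjoin : ∀ i, P i (lP i) = Q (σ i) 0 := fun i => (hσ i).symm
  refine ⟨fun i => walkAppend (P i) (lP i) (Q (σ i)), fun i => lP i + lQ (σ i),
    fun i => ⟨(hP.1 i).1.append (hQ.1 (σ i)).1 (hjoin i) (fun v h₁ h₂ => (hmeet _ _ v h₁ h₂).1),
      by simpa [walkAppend_zero] using (hP.1 i).2.1,
      by simpa [walkAppend_add (hjoin i)] using (hQ.1 (σ i)).2.2⟩, ?_⟩
  intro i i' hne
  refine Set.disjoint_left.mpr fun v hv hv' => hne ?_
  have cross : ∀ i i', v ∈ walkVerts (P i) (lP i) → v ∈ walkVerts (Q (σ i')) (lQ (σ i')) →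
      i = i' := fun i i' h h' => by
    obtain ⟨h₁, h₂⟩ := hmeet _ _ v h h'
    exact hP.end_injective (by simp only [← h₁, h₂, hσ])
  rcases walkVerts_append_subset hv with h | h <;>
    rcases walkVerts_append_subset hv' with h' | h'
  · exact hP.eq_of_mem_of_mem h h'
  · exact cross i i' h h'
  · exact (cross i' i h' h).symm
  · exact hP.end_injective (by simp only [← hσ, hQ.eq_of_mem_of_mem h h'])

theorem ExLinkage.of_avoiding {Z : Set V}
    (h : ExLinkage (fun u v => R u v ∧ u ∉ Z ∧ v ∉ Z) A B ∅ s) (hAZ : Disjoint A Z) :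
    ExLinkage R A B Z s := by
  obtain ⟨P, len, hP, hdis⟩ := h
  refine ⟨P, len, fun i => ⟨(hP i).1.mono fun u v h => h.1, (hP i).2.1, (hP i).2.2.1, ?_⟩, hdis⟩
  refine Set.disjoint_left.mpr fun v ⟨l, hl, hv⟩ hvZ => ?_
  rcases Nat.eq_zero_or_pos l with rfl | hl0
  · exact Set.disjoint_left.mp hAZ (hv ▸ (hP i).2.1) hvZ
  · have := ((hP i).1.1 (l - 1) (by omega)).2.2
    rw [Nat.sub_add_cancel hl0, hv] at this
    exact this hvZ

end Linkage

section Menger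

variable {R R' : V → V → Prop} {A B : Set V} {s : ℕ} {w : ℕ → V} {n : ℕ}

theorem exists_isLinkage_of_le_card_inter [DecidableEq V] {A B : Finset V} (h : s ≤ #(A ∩ B)) :
    ∃ (P : Fin s → ℕ → V) (len : Fin s → ℕ), IsLinkage R A B P len := by
  obtain ⟨f⟩ : Nonempty (Fin s ↪ ↥(A ∩ B)) :=
    Function.Embedding.nonempty_of_card_le (by simpa using h)
  have hf : ∀ i, (f i : V) ∈ A ∧ (f i : V) ∈ B := fun i => mem_inter.mp (f i).2
  refine ⟨fun i _ => f i, fun _ => 0,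
    fun i => ⟨⟨fun l hl => absurd hl l.not_lt_zero,
      fun a ha b hb _ => by dsimp only at ha hb; omega⟩, hf i⟩,
    fun i j hij => ?_⟩
  rw [walkVerts_zero, walkVerts_zero, Set.disjoint_singleton]
  exact fun h => hij (f.injective (Subtype.ext h))

theorem Separates.of_prefix {X T : Set V} (hX : Separates R A B X) (hT : Separates R' A X T)
    (hR : ∀ u v, R u v → u ∉ X → R' u v) : Separates R A B T := by
  classical
  intro w n hw h0 hn
  obtain ⟨i, hi, hiX⟩ := hX w n hw h0 hn
  -- the part of the path up to its first vertex in `X`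
  have hex : ∃ l, w l ∈ X := ⟨i, hiX⟩
  have hl : Nat.find hex ≤ n := (Nat.find_min' hex hiX).trans hi
  have hpre : IsPathOn R' w (Nat.find hex) :=
    ⟨fun j hj => hR _ _ (hw.1 j (by omega)) (Nat.find_min hex hj), (hw.take hl).2⟩
  obtain ⟨j, hj, hjT⟩ := hT w _ hpre h0 (Nat.find_spec hex)
  exact ⟨j, hj.trans hl, hjT⟩

theorem Separates.of_suffix {Y T : Set V} (hY : Separates R A B Y) (hT : Separates R' Y B T)
    (hR : ∀ u v, R u v → v ∉ Y → R' u v) : Separates R A B T := by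
  classical
  intro w n hw h0 hn
  obtain ⟨i, hi, hiY⟩ := hY w n hw h0 hn
  -- the part of the path from its last vertex in `Y`
  set l := Nat.findGreatest (fun l => w l ∈ Y) n
  have hl : l ≤ n := Nat.findGreatest_le n
  have hsuf : IsPathOn R' (fun j => w (j + l)) (n - l) :=
    ⟨fun j hj => hR _ _ ((hw.drop hl).1 j hj) (Nat.findGreatest_is_greatest
      (P := fun l => w l ∈ Y) (n := n) (k := j + 1 + l) (by omega) (by omega)), (hw.drop hl).2⟩
  obtain ⟨j, hj, hjT⟩ := hT _ _ hsuf
    (by simpa using Nat.findGreatest_spec (P := fun l => w l ∈ Y) hi hiY)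
    (by simpa [Nat.sub_add_cancel hl] using hn)
  exact ⟨j + l, by omega, hjT⟩

def edgeRel (E : Finset (V × V)) : V → V → Prop := fun u v => (u, v) ∈ E

theorem IsPathOn.edgeRel_erase_or [DecidableEq V] {E : Finset (V × V)} (e : V × V)
    (hw : IsPathOn (edgeRel E) w n) :
    IsPathOn (edgeRel (E.erase e)) w n ∨ ∃ l < n, w l = e.1 ∧ w (l + 1) = e.2 := by
  by_cases h : ∃ l < n, (w l, w (l + 1)) = e
  · obtain ⟨l, hl, rfl⟩ := h
    exact Or.inr ⟨l, hl, rfl, rfl⟩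
  · simp only [not_exists, not_and] at h
    exact Or.inl ⟨fun i hi => mem_erase.mpr ⟨h i hi, hw.1 i hi⟩, hw.2⟩

theorem Separates.insert_of_erase [DecidableEq V] {E : Finset (V × V)} {e : V × V} {S : Set V}
    (hS : Separates (edgeRel (E.erase e)) A B S) :
    Separates (edgeRel E) A B (insert e.1 S) ∧ Separates (edgeRel E) A B (insert e.2 S) := by
  constructor <;> intro w n hw h0 hn <;> rcases hw.edgeRel_erase_or e with hw' | ⟨l, hl, h1, h2⟩
  · obtain ⟨i, hi, hiS⟩ := hS w n hw' h0 hn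
    exact ⟨i, hi, Or.inr hiS⟩
  · exact ⟨l, hl.le, Or.inl h1⟩
  · obtain ⟨i, hi, hiS⟩ := hS w n hw' h0 hn
    exact ⟨i, hi, Or.inr hiS⟩
  · exact ⟨l + 1, hl, Or.inl h2⟩

theorem eq_last_of_mem {X : Set V} (hX : ∀ l < n, w l ∉ X) {v : V}
    (hv : v ∈ walkVerts w n) (hvX : v ∈ X) : v = w n := by
  obtain ⟨l, hl, rfl⟩ := hv
  rcases hl.lt_or_eq with hl | rfl
  · exact absurd hvX (hX l hl)
  · rfl

theorem eq_first_of_mem {Y : Set V} (hY : ∀ l, 0 < l → l ≤ n → w l ∉ Y) {v : V}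
    (hv : v ∈ walkVerts w n) (hvY : v ∈ Y) : v = w 0 := by
  obtain ⟨l, hl, rfl⟩ := hv
  rcases Nat.eq_zero_or_pos l with rfl | hl0
  · rfl
  · exact absurd hvY (hY l hl0 hl)

/-- Otherwise the two walks would combine into an `A`–`B` walk avoiding `S`. -/
theorem Separates.mem_of_mem_of_mem {S : Set V} (hS : Separates R A B S) {p q : ℕ → V}
    {np nq : ℕ} (hp : IsWalkOn R p np) (hp0 : p 0 ∈ A) (hpS : ∀ l < np, p l ∉ S)
    (hq : IsWalkOn R q nq) (hqn : q nq ∈ B) (hqS : ∀ l, 0 < l → l ≤ nq → q l ∉ S) {v : V}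
    (hvp : v ∈ walkVerts p np) (hvq : v ∈ walkVerts q nq) : v ∈ S := by
  by_contra hvS
  obtain ⟨a, ha, rfl⟩ := hvp
  obtain ⟨b, hb, hba⟩ := hvq
  have hjoin : p a = (fun l => q (l + b)) 0 := by simpa using hba.symm
  obtain ⟨w', n', hw', h0, hn, hsub⟩ := ((hp.take ha).append (hq.drop b) hjoin).exists_isPathOn
  obtain ⟨i, hi, hiS⟩ := hS w' n' hw' (by rwa [h0, walkAppend_zero])
    (by rwa [hn, walkAppend_add hjoin, Nat.sub_add_cancel hb])
  rcases walkVerts_append_subset (hsub (mem_walkVerts_of_le hi)) with ⟨l, hl, hlv⟩ | ⟨l, hl, hlv⟩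
  · rcases hl.lt_or_eq with hl | rfl
    · exact hpS l (by omega) (hlv ▸ hiS)
    · exact hvS (hlv ▸ hiS)
  · replace hiS : q (l + b) ∈ S := by simpa [← hlv] using hiS
    rcases Nat.eq_zero_or_pos (l + b) with h | h
    · obtain ⟨rfl, rfl⟩ : l = 0 ∧ b = 0 := by omega
      exact hvS (by simpa [← hba] using hiS)
    · exact hqS (l + b) h (by omega) hiS

theorem IsPathOn.exists_extend [DecidableEq V] {x y : V} (hxy : R x y) {p : ℕ → V}
    (hp : IsPathOn R p n) (hy : y ∉ walkVerts p n) :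
    ∃ p' n', IsPathOn R p' n' ∧ p' 0 = p 0 ∧ p' n' = (if p n = x then y else p n) ∧
      walkVerts p' n' ⊆ insert y (walkVerts p n) ∧ (y ∈ walkVerts p' n' → p n = x) := by
  by_cases hx : p n = x
  · subst hx
    have hne : p n ≠ y := fun h => hy (h ▸ mem_walkVerts_of_le le_rfl)
    refine ⟨walkAppend p n (edgeWalk (p n) y), n + 1,
      hp.append (isPathOn_edgeWalk hxy hne) rfl fun v _ hv => ?_, walkAppend_zero,
      by simp [walkAppend_add, edgeWalk], fun v hv => ?_, fun _ => rfl⟩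
    · rw [walkVerts_edgeWalk] at hv
      rcases hv with rfl | rfl
      · rfl
      · contradiction
    · rcases walkVerts_append_subset hv with h | h
      · exact Or.inr h
      · rw [walkVerts_edgeWalk] at h
        rcases h with rfl | rfl
        · exact Or.inr (mem_walkVerts_of_le le_rfl)
        · exact Or.inl rfl
  · exact ⟨p, n, hp, rfl, (if_neg hx).symm, Set.subset_insert _ _, fun h => absurd h hy⟩

/-- The gluing step of Göring's proof of Menger's theorem. -/
theorem IsLinkage.glue_through_edge [DecidableEq V] (hR : ∀ u v, R' u v → R u v) {x y : V}
    (hxy : R x y) {S : Finset V} (hS : Separates R' A B S) (hx : x ∉ S) (hy : y ∉ S)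
    (hs : #(insert y S) ≤ s) {P Q : Fin s → ℕ → V} {lP lQ : Fin s → ℕ}
    (hP : IsLinkage R' A ↑(insert x S) P lP) (hPX : ∀ i, ∀ l < lP i, P i l ∉ insert x S)
    (hQ : IsLinkage R' ↑(insert y S) B Q lQ)
    (hQY : ∀ j l, 0 < l → l ≤ lQ j → Q j l ∉ insert y S) :
    ∃ (P' : Fin s → ℕ → V) (len : Fin s → ℕ), IsLinkage R A B P' len := by
  have hmeetS : ∀ i j v, v ∈ walkVerts (P i) (lP i) → v ∈ walkVerts (Q j) (lQ j) → v ∈ S :=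
    fun i j v => hS.mem_of_mem_of_mem (hP.1 i).1.1 (hP.1 i).2.1
      (fun l hl h => hPX i l hl (mem_insert_of_mem h)) (hQ.1 j).1.1 (hQ.1 j).2.2
      (fun l h0 hl h => hQY j l h0 hl (mem_insert_of_mem h))
  have hyP : ∀ i, y ∉ walkVerts (P i) (lP i) := by
    intro i hyi
    obtain ⟨j, hj⟩ := exists_eq_of_injective_of_card_le hQ.start_injective
      (fun j => (hQ.1 j).2.1) hs y (mem_insert_self y S)
    exact hy (hmeetS i j y hyi (hj ▸ mem_walkVerts_of_le (Nat.zero_le _)))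
  choose P' lP' hP'path hP'0 hP'end hP'verts hP'y using
    fun i => ((hP.1 i).1.mono hR).exists_extend hxy (hyP i)
  have hP'link : IsLinkage R A ↑(insert y S) P' lP' := by
    refine ⟨fun i => ⟨hP'path i, (hP'0 i).symm ▸ (hP.1 i).2.1, ?_⟩, fun i j hij => ?_⟩
    · rw [hP'end]
      split_ifs with h
      · exact mem_insert_self _ _
      · exact mem_insert_of_mem ((mem_insert.mp (hP.1 i).2.2).resolve_left h)
    · refine Set.disjoint_left.mpr fun v hvi hvj => hij ?_
      rcases hP'verts i hvi with rfl | hi <;> rcases hP'verts j hvj with hj | hj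
      · exact hP.end_injective ((hP'y i hvi).trans (hP'y j hvj).symm)
      · exact absurd hj (hyP j)
      · exact absurd (hj ▸ hi) (hyP i)
      · exact hP.eq_of_mem_of_mem hi hj
  refine hP'link.append hs (hQ.mono hR) fun i j v hvi hvj => ?_
  have hQfirst : v ∈ insert y S → v = Q j 0 := eq_first_of_mem (hQY j) hvj
  rcases hP'verts i hvi with rfl | hv
  · exact ⟨by rw [hP'end, if_pos (hP'y i hvi)], hQfirst (mem_insert_self _ _)⟩
  · have hvS := hmeetS i j v hv hvj
    have hvlast : v = P i (lP i) := eq_last_of_mem (hPX i) hv (mem_insert_of_mem hvS)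
    refine ⟨?_, hQfirst (mem_insert_of_mem hvS)⟩
    rw [hP'end, if_neg fun h : P i (lP i) = x => hx (by rwa [← h, ← hvlast])]
    exact hvlast

/-- Menger's theorem for finitely many edges, by Göring's induction on the edge set. -/
theorem exists_isLinkage_of_forall_separates [DecidableEq V] (E : Finset (V × V)) :
    ∀ (A B : Finset V) (s : ℕ), (∀ X : Finset V, Separates (edgeRel E) A B X → s ≤ #X) →
      ∃ (P : Fin s → ℕ → V) (len : Fin s → ℕ), IsLinkage (edgeRel E) A B P len := by
  induction E using Finset.strongInduction with
  | H E IH =>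
  intro A B s hsep
  rcases E.eq_empty_or_nonempty with rfl | ⟨e, he⟩
  · refine exists_isLinkage_of_le_card_inter (hsep _ fun w n hw h0 hn => ?_)
    obtain rfl : n = 0 := by
      by_contra hn0
      exact notMem_empty _ (hw.1 0 (by omega))
    exact ⟨0, le_rfl, by simpa using And.intro h0 hn⟩
  by_cases hE' : ∀ X : Finset V, Separates (edgeRel (E.erase e)) A B X → s ≤ #X
  · obtain ⟨P, len, hP⟩ := IH _ (erase_ssubset he) A B s hE'
    exact ⟨P, len, hP.mono fun u v h => mem_of_mem_erase h⟩
  obtain ⟨S, hS, hSs⟩ : ∃ S : Finset V, Separates (edgeRel (E.erase e)) A B S ∧ #S < s := by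
    simpa using hE'
  obtain ⟨hSx, hSy⟩ := hS.insert_of_erase
  have hx : s ≤ #(insert e.1 S) := hsep _ (by rwa [coe_insert])
  have hy : s ≤ #(insert e.2 S) := hsep _ (by rwa [coe_insert])
  have hxS : e.1 ∉ S := fun h => by rw [insert_eq_of_mem h] at hx; omega
  have hyS : e.2 ∉ S := fun h => by rw [insert_eq_of_mem h] at hy; omega
  -- link `A` to `S + e.1` by edges not leaving `S + e.1`, and `S + e.2` to `B` by edges not
  -- entering `S + e.2`; both edge sets miss `e`
  set X := insert e.1 S
  set Y := insert e.2 S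
  have hEout : (E.erase e).filter (fun f => f.1 ∉ X) ⊂ E :=
    (filter_subset _ _).trans_ssubset (erase_ssubset he)
  have hEin : (E.erase e).filter (fun f => f.2 ∉ Y) ⊂ E :=
    (filter_subset _ _).trans_ssubset (erase_ssubset he)
  have hXsep : Separates (edgeRel E) A B X := by rwa [coe_insert]
  have hYsep : Separates (edgeRel E) A B Y := by rwa [coe_insert]
  obtain ⟨P, lP, hP⟩ := IH _ hEout A X s fun T hT => hsep T <| hXsep.of_prefix hT
    fun u v huv hu => mem_filter.mpr ⟨mem_erase.mpr ⟨fun h => hu (by simp [← h, X]), huv⟩, hu⟩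
  obtain ⟨Q, lQ, hQ⟩ := IH _ hEin Y B s fun T hT => hsep T <| hYsep.of_suffix hT
    fun u v huv hv => mem_filter.mpr ⟨mem_erase.mpr ⟨fun h => hv (by simp [← h, Y]), huv⟩, hv⟩
  exact IsLinkage.glue_through_edge (fun u v h => mem_of_mem_erase h) he hS hxS hyS
    (by rw [card_insert_of_notMem hyS]; omega)
    (hP.mono fun u v h => (mem_filter.mp h).1)
    (fun i l hl => (mem_filter.mp ((hP.1 i).1.1 l hl)).2)
    (hQ.mono fun u v h => (mem_filter.mp h).1)
    (fun j l h0 hl => by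
      simpa [Nat.sub_add_cancel h0, Y] using (mem_filter.mp ((hQ.1 j).1.1 (l - 1) (by omega))).2)

end Menger

theorem exists_transversal_of_forall_finite [DecidableEq V] (c : ℕ) (F : Set (Finset V))
    (hF : ∀ G : Finset (Finset V), ↑G ⊆ F → ∃ X : Finset V, #X ≤ c ∧ ∀ f ∈ G, (f ∩ X).Nonempty) :
    ∃ X : Finset V, #X ≤ c ∧ ∀ f ∈ F, (f ∩ X).Nonempty := by
  induction c generalizing F with
  | zero =>
    refine ⟨∅, le_rfl, fun f hf => ?_⟩
    obtain ⟨X, hX, hfX⟩ := hF {f} (by simpa using hf)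
    simpa [card_eq_zero.mp (Nat.le_zero.mp hX)] using hfX f (mem_singleton_self f)
  | succ c IH =>
  rcases F.eq_empty_or_nonempty with rfl | ⟨f₀, hf₀⟩
  · exact ⟨∅, Nat.zero_le _, by simp⟩
  -- otherwise `f₀` and bad subfamilies for all `v ∈ f₀` form a finite subfamily without a
  -- transversal of size `c + 1`
  obtain ⟨v, hv⟩ : ∃ v ∈ f₀, ∀ G : Finset (Finset V), ↑G ⊆ {f ∈ F | v ∉ f} →
      ∃ X : Finset V, #X ≤ c ∧ ∀ f ∈ G, (f ∩ X).Nonempty := by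
    by_contra! hbad
    choose G hGF hG using hbad
    obtain ⟨X, hX, hGX⟩ := hF (insert f₀ (f₀.attach.biUnion fun v => G v.1 v.2)) <| by
      simp only [coe_insert, coe_biUnion, Set.insert_subset_iff, Set.iUnion_subset_iff]
      exact ⟨hf₀, fun v _ => (hGF v.1 v.2).trans (Set.sep_subset _ _)⟩
    obtain ⟨u, hu⟩ := hGX f₀ (mem_insert_self _ _)
    obtain ⟨huf₀, huX⟩ := mem_inter.mp hu
    obtain ⟨f, hfG, hfX⟩ := hG u huf₀ (X.erase u) (by rw [card_erase_of_mem huX]; omega)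
    obtain ⟨w, hw⟩ := hGX f (mem_insert_of_mem (mem_biUnion.mpr ⟨⟨u, huf₀⟩, mem_attach _ _, hfG⟩))
    have hwu : w ≠ u := fun h => (hGF u huf₀ hfG).2 (h ▸ (mem_inter.mp hw).1)
    exact eq_empty_iff_forall_notMem.mp hfX w
      (mem_inter.mpr ⟨(mem_inter.mp hw).1, mem_erase.mpr ⟨hwu, (mem_inter.mp hw).2⟩⟩)
  obtain ⟨X, hX, hFX⟩ := IH _ hv.2
  refine ⟨insert v X, (card_insert_le v X).trans (by omega), fun f hf => ?_⟩
  by_cases hvf : v ∈ f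
  · exact ⟨v, mem_inter.mpr ⟨hvf, mem_insert_self v X⟩⟩
  · exact (hFX f ⟨hf, hvf⟩).mono (inter_subset_inter_left (subset_insert v X))

/-- Menger's theorem for finite terminal sets in an arbitrary digraph: by compactness, it
reduces to the finite subgraphs spanned by finitely many `A`–`B` paths. -/
theorem exists_separates_of_not_exLinkage [DecidableEq V] {R : V → V → Prop} {A B : Finset V}
    {s : ℕ} (h : ¬ ExLinkage R A B ∅ s) : ∃ X : Finset V, #X < s ∧ Separates R A B X := by
  have hs : s ≠ 0 := by
    rintro rfl
    exact h ⟨Fin.elim0, Fin.elim0, fun i => i.elim0, fun i => i.elim0⟩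
  let F : Set (Finset V) :=
    {f | ∃ w n, IsPathOn R w n ∧ w 0 ∈ A ∧ w n ∈ B ∧ f = (range (n + 1)).image w}
  suffices ∃ X : Finset V, #X ≤ s - 1 ∧ ∀ f ∈ F, (f ∩ X).Nonempty by
    obtain ⟨X, hX, hFX⟩ := this
    refine ⟨X, by omega, fun w n hw h0 hn => ?_⟩
    obtain ⟨v, hv⟩ := hFX _ ⟨w, n, hw, h0, hn, rfl⟩
    simp only [mem_inter, mem_image, mem_range] at hv
    obtain ⟨⟨i, hi, rfl⟩, hiX⟩ := hv
    exact ⟨i, by omega, hiX⟩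
  refine exists_transversal_of_forall_finite _ F fun G hG => ?_
  choose p np hp using fun f : G => hG f.2
  let E : Finset (V × V) :=
    G.attach.biUnion fun f => (range (np f)).image fun i => (p f i, p f (i + 1))
  have hpE : ∀ f, IsPathOn (edgeRel E) (p f) (np f) := fun f =>
    ⟨fun i hi => mem_biUnion.mpr ⟨f, mem_attach _ _, mem_image.mpr ⟨i, mem_range.mpr hi, rfl⟩⟩,
      (hp f).1.2⟩
  have hER : ∀ u v, edgeRel E u v → R u v := by
    intro u v huv
    obtain ⟨f, -, hf⟩ := mem_biUnion.mp huv
    obtain ⟨i, hi, hfi⟩ := mem_image.mp hf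
    obtain ⟨rfl, rfl⟩ := Prod.mk.inj hfi
    exact (hp f).1.1 i (mem_range.mp hi)
  obtain ⟨X, hXsep, hX⟩ : ∃ X : Finset V, Separates (edgeRel E) A B X ∧ #X < s := by
    by_contra! hsep
    obtain ⟨P, len, hP⟩ := exists_isLinkage_of_forall_separates E A B s hsep
    exact h (hP.mono hER).exLinkage
  refine ⟨X, by omega, fun f hf => ?_⟩
  obtain ⟨i, hi, hiX⟩ := hXsep _ _ (hpE ⟨f, hf⟩) (hp _).2.1 (hp _).2.2.1
  have hif : p ⟨f, hf⟩ i ∈ (range (np ⟨f, hf⟩ + 1)).image (p ⟨f, hf⟩) :=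
    mem_image_of_mem _ (mem_range.mpr (by omega))
  rw [← (hp ⟨f, hf⟩).2.2.2] at hif
  exact ⟨_, mem_inter.mpr ⟨hif, hiX⟩⟩

section OddCycles

variable {R : V → V → Prop}

theorem walkVerts_val {W : Set V} (c : ℕ → W) (m : ℕ) :
    walkVerts (fun i => (c i : V)) m = Subtype.val '' walkVerts c m := by
  ext v
  simp [walkVerts]

theorem IsCycleOn.val {W : Set V} {c : ℕ → W} {m : ℕ}
    (hc : IsCycleOn (fun u v : W => R u v) c m) : IsCycleOn R (fun i => (c i : V)) m :=
  ⟨hc.1, hc.2.1, congrArg Subtype.val hc.2.2.1,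
    fun i hi j hj h => hc.2.2.2 i hi j hj (Subtype.ext h)⟩

theorem IsCycleOn.exists_restrict {W : Set V} {c : ℕ → V} {m : ℕ} (hc : IsCycleOn R c m)
    (hW : walkVerts c m ⊆ W) :
    ∃ c' : ℕ → W, IsCycleOn (fun u v : W => R u v) c' m ∧ ∀ i ≤ m, (c' i : V) = c i := by
  refine ⟨fun i => ⟨c (min i m), hW (mem_walkVerts_of_le (min_le_right i m))⟩, ⟨hc.1, ?_, ?_, ?_⟩,
    fun i hi => by simp [min_eq_left hi]⟩
  · intro i hi
    simpa [min_eq_left hi.le, min_eq_left (Nat.succ_le_of_lt hi)] using hc.2.1 i hi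
  · simpa using hc.2.2.1
  · intro i hi j hj h
    have h' : c (min i m) = c (min j m) := congrArg Subtype.val h
    rw [min_eq_left hi.le, min_eq_left hj.le] at h'
    exact hc.2.2.2 i hi j hj h'

theorem halfPackOdd_succ {m : ℕ} {cs : Fin m → ℕ → V} {lens : Fin m → ℕ}
    (hcs : ∀ i, IsCycleOn R (cs i) (lens i) ∧ Odd (lens i))
    (hcount : ∀ v, {i | v ∈ walkVerts (cs i) (lens i)}.ncard ≤ 2) {c : ℕ → V} {l : ℕ}
    (hc : IsCycleOn R c l) (hl : Odd l)
    (hdisj : ∀ i, Disjoint (walkVerts c l) (walkVerts (cs i) (lens i))) :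
    HalfPackOdd R (m + 1) := by
  refine ⟨Fin.snoc (α := fun _ => ℕ → V) cs c, Fin.snoc lens l,
    Fin.lastCases (by simpa using ⟨hc, hl⟩) (fun i => by simpa using hcs i), fun v => ?_⟩
  by_cases hv : v ∈ walkVerts c l
  · refine (Set.ncard_le_ncard (t := {Fin.last m}) (fun i hi => ?_)).trans (by simp)
    induction i using Fin.lastCases with
    | last => rfl
    | cast i => exact absurd (by simpa using hi) (Set.disjoint_left.mp (hdisj i) hv)
  · refine (Set.ncard_le_ncard (t := Fin.castSucc '' {i | v ∈ walkVerts (cs i) (lens i)})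
      (fun i hi => ?_)).trans ((Set.ncard_image_of_injective _ (Fin.castSucc_injective m)).le.trans
      (hcount v))
    induction i using Fin.lastCases with
    | last => exact absurd (by simpa using hi) hv
    | cast i => exact ⟨i, by simpa using hi, rfl⟩

theorem halfPackOdd_succ_of_induced {W : Set V} {m : ℕ}
    (hW : HalfPackOdd (fun u v : W => R u v) m) {c : ℕ → V} {l : ℕ} (hc : IsCycleOn R c l)
    (hl : Odd l) (hcW : Disjoint (walkVerts c l) W) : HalfPackOdd R (m + 1) := by
  obtain ⟨cs, lens, hcs, hcount⟩ := hW
  refine halfPackOdd_succ (cs := fun i n => (cs i n : V)) (fun i => ⟨(hcs i).1.val, (hcs i).2⟩)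
    (fun v => ?_) hc hl fun i => ?_
  · by_cases hv : v ∈ W
    · convert hcount ⟨v, hv⟩ using 3
      simp [walkVerts_val, hv]
    · convert Nat.zero_le 2
      simp [walkVerts_val, hv]
  · rw [walkVerts_val]
    exact hcW.mono_right (Set.image_subset_iff.mpr fun x _ => x.2)

theorem HitsOdd.hitsOddIn_image_val {W : Set V} {S : Set W}
    (hS : HitsOdd (fun u v : W => R u v) S) : HitsOddIn R (Subtype.val '' S) W := by
  intro c m hc hm hcW
  obtain ⟨c', hc', hcc'⟩ := hc.exists_restrict hcW
  obtain ⟨i, hi, hiS⟩ := hS c' m hc' hm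
  exact ⟨i, hi, c' i, hiS, hcc' i hi.le⟩

theorem HitsOdd.hitsOddIn_inter {T : Set V} (hT : HitsOdd R T) (W : Set V) :
    HitsOddIn R (T ∩ W) W := fun c m hc hm hcW => by
  obtain ⟨i, hi, hiT⟩ := hT c m hc hm
  exact ⟨i, hi, hiT, hcW (mem_walkVerts_of_le hi.le)⟩

theorem HitsOddIn.mono {S S' W : Set V} (h : HitsOddIn R S W) (hS : S ⊆ S') :
    HitsOddIn R S' W := fun c m hc hm hcW => by
  obtain ⟨i, hi, hiS⟩ := h c m hc hm hcW
  exact ⟨i, hi, hS hiS⟩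

theorem hitsOddIn_of_halfPackOdd_induced {k : ℕ} (hG : ¬ HalfPackOdd R (k + 1))
    {C D : Set V} (hC : HalfPackOdd (fun u v : C => R u v) k) (hCD : Disjoint C D) (S : Set V) :
    HitsOddIn R S D := fun _ _ hc hm hcD =>
  (hG (halfPackOdd_succ_of_induced hC hc hm (hCD.symm.mono_left hcD))).elim

theorem exists_finset_hitsOddIn_of_induced {t : ℕ} {W : Set V}
    (h : ∃ S : Set W, S.Finite ∧ S.ncard ≤ t ∧ HitsOdd (fun u v : W => R u v) S) :
    ∃ S : Finset V, #S ≤ t ∧ HitsOddIn R S W := by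
  obtain ⟨S, hfin, hcard, hS⟩ := h
  refine ⟨(hfin.image Subtype.val).toFinset, ?_, by simpa using hS.hitsOddIn_image_val⟩
  rwa [← Set.ncard_coe_finset, Set.Finite.coe_toFinset,
    Set.ncard_image_of_injective _ Subtype.val_injective]

end OddCycles

section Split

variable {R : V → V → Prop}

theorem ReachIn.refl {S : Set V} {a : V} (ha : a ∈ S) : ReachIn R S a a :=
  ⟨fun _ => a, 0, fun i hi => absurd hi i.not_lt_zero, rfl, rfl, fun _ _ => ha⟩

theorem ReachIn.tail {S : Set V} {a u v : V} (h : ReachIn R S a u) (huv : R u v) (hv : v ∈ S) :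
    ReachIn R S a v := by
  obtain ⟨w, n, hw, h0, hn, hS⟩ := h
  have hjoin : w n = edgeWalk u v 0 := hn
  refine ⟨walkAppend w n (edgeWalk u v), n + 1, hw.append (isWalkOn_edgeWalk huv) hjoin,
    by rwa [walkAppend_zero], by simp [walkAppend_add hjoin, edgeWalk], fun i hi => ?_⟩
  rcases walkVerts_append_subset (mem_walkVerts_of_le hi) with ⟨j, hj, hji⟩ | hi'
  · exact hji ▸ hS j hj
  · rw [walkVerts_edgeWalk] at hi'
    rcases hi' with hi' | hi'
    · rw [hi', ← hn]
      exact hS n le_rfl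
    · rw [hi']
      exact hv

theorem IsCycleOn.forall_mem_of_closed {S C : Set V} {c : ℕ → V} {m : ℕ} (hc : IsCycleOn R c m)
    (hS : ∀ i ≤ m, c i ∈ S) (hC : ∀ u v, u ∈ C → R u v → v ∈ S → v ∈ C) {i₀ : ℕ} (hi₀ : i₀ ≤ m)
    (h : c i₀ ∈ C) : ∀ i ≤ m, c i ∈ C := by
  have forward : ∀ j, c j ∈ C → ∀ d, j + d ≤ m → c (j + d) ∈ C := by
    intro j hj d
    induction d with
    | zero => exact fun _ => hj
    | succ d ih => exact fun hd => hC _ _ (ih (by omega)) (hc.2.1 _ (by omega)) (hS _ hd)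
  have h0 : c 0 ∈ C := by
    rw [← hc.2.2.1, ← Nat.add_sub_cancel' hi₀]
    exact forward i₀ h _ (by omega)
  exact fun i hi => by simpa using forward 0 h0 i (by simpa using hi)

/-- `C` consists of the vertices reachable from `A` outside `U`, `D` of the other vertices
outside `U`. -/
theorem exists_cycle_split {A B U : Set V} (hAB : ∀ a ∈ A, ∀ b ∈ B, ¬ ReachIn R Uᶜ a b) :
    ∃ C D : Set V, Disjoint C D ∧ Disjoint C B ∧ Disjoint D A ∧
      ∀ c m, IsCycleOn R c m → (∀ i < m, c i ∉ U) → walkVerts c m ⊆ C ∨ walkVerts c m ⊆ D := by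
  refine ⟨{v | ∃ a ∈ A, ReachIn R Uᶜ a v}, Uᶜ \ {v | ∃ a ∈ A, ReachIn R Uᶜ a v},
    Set.disjoint_sdiff_right, Set.disjoint_left.mpr fun b ⟨a, ha, hab⟩ hb => hAB a ha b hb hab,
    Set.disjoint_left.mpr fun a ha haA => ha.2 ⟨a, haA, ReachIn.refl ha.1⟩, ?_⟩
  intro c m hc hU
  have hS : ∀ i ≤ m, c i ∈ Uᶜ := by
    intro i hi
    rcases hi.lt_or_eq with hi | rfl
    · exact hU i hi
    · rw [hc.2.2.1]
      exact hU 0 hc.1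
  by_cases hC : ∃ i ≤ m, c i ∈ {v | ∃ a ∈ A, ReachIn R Uᶜ a v}
  · obtain ⟨i₀, hi₀, h⟩ := hC
    have hall := hc.forall_mem_of_closed hS
      (fun u v (hu : ∃ a ∈ A, ReachIn R Uᶜ a u) huv hv =>
        let ⟨a, ha, hau⟩ := hu; ⟨a, ha, hau.tail huv hv⟩) hi₀ h
    exact Or.inl fun v ⟨i, hi, hv⟩ => hv ▸ hall i hi
  · simp only [not_exists, not_and] at hC
    exact Or.inr fun v ⟨i, hi, hv⟩ => hv ▸ ⟨hS i hi, hC i hi⟩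

theorem hitsOdd_of_split {U C D : Set V}
    (hsplit : ∀ c m, IsCycleOn R c m → (∀ i < m, c i ∉ U) → walkVerts c m ⊆ C ∨ walkVerts c m ⊆ D)
    {T : Set V} (hU : U ⊆ T) (hC : HitsOddIn R T C) (hD : HitsOddIn R T D) : HitsOdd R T := by
  intro c m hc hm
  by_cases hcU : ∃ i < m, c i ∈ U
  · obtain ⟨i, hi, hiU⟩ := hcU
    exact ⟨i, hi, hU hiU⟩
  · simp only [not_exists, not_and] at hcU
    rcases hsplit c m hc hcU with h | h
    · exact hC c m hc hm h
    · exact hD c m hc hm h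

end Split

theorem exists_cycle_split_of_not_exLinkage [DecidableEq V] {R : V → V → Prop}
    {A B Z : Finset V} {s : ℕ} (hAZ : Disjoint A Z) (h : ¬ ExLinkage R A B Z s) :
    ∃ X : Finset V, #X < s ∧ ∃ C D : Set V, Disjoint C D ∧ Disjoint C B ∧ Disjoint D A ∧
      ∀ c m, IsCycleOn R c m → (∀ i < m, c i ∉ (↑(Z ∪ X) : Set V)) →
        walkVerts c m ⊆ C ∨ walkVerts c m ⊆ D := by
  obtain ⟨X, hX, hXsep⟩ :=
    exists_separates_of_not_exLinkage fun h' => h (h'.of_avoiding (disjoint_coe.mpr hAZ))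
  refine ⟨X, hX, exists_cycle_split fun a ha b hb ⟨w, n, hw, h0, hn, hwU⟩ => ?_⟩
  have hwZ : IsWalkOn (fun u v => R u v ∧ u ∉ (Z : Set V) ∧ v ∉ (Z : Set V)) w n := fun i hi =>
    ⟨hw i hi, fun h => hwU i hi.le (by simp [h]), fun h => hwU (i + 1) hi (by simp [h])⟩
  obtain ⟨w', n', hw', h0', hn', hsub⟩ := hwZ.exists_isPathOn
  obtain ⟨i, hi, hiX⟩ := hXsep w' n' hw' (by rwa [h0', h0]) (by rwa [hn', hn])
  obtain ⟨j, hj, hji⟩ := hsub (mem_walkVerts_of_le hi)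
  exact hwU j hj (by simp [hji, hiX])

theorem exLinkage_of_min_hitsOdd [DecidableEq V] {R : V → V → Prop} {k t : ℕ}
    (ht : ∀ (W : Type) (R' : W → W → Prop), ¬ HalfPackOdd R' k →
        ∃ S : Set W, S.Finite ∧ S.ncard ≤ t ∧ HitsOdd R' S)
    (hG : ¬ HalfPackOdd R (k + 1)) {T : Finset V} (hT : HitsOdd R T)
    (hmin : ∀ T' : Finset V, HitsOdd R T' → #T ≤ #T') {A B : Finset V} (hA : A ⊆ T) (hB : B ⊆ T)
    (hAB : Disjoint A B) (hcard : #A = #B) (hts : 2 * t ≤ #A) :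
    ExLinkage R A B (↑T \ (↑A ∪ ↑B)) #A := by
  set Z := T \ (A ∪ B) with hZ
  rw [show (↑T \ (↑A ∪ ↑B) : Set V) = ↑Z by simp [hZ]]
  by_contra hno
  obtain ⟨X, hX, C, D, hCD, hCB, hDA, hsplit⟩ :=
    exists_cycle_split_of_not_exLinkage (disjoint_sdiff.mono_left subset_union_left) hno
  have hsmall : ∀ T' : Finset V, Z ∪ X ⊆ T' → HitsOddIn R T' C → HitsOddIn R T' D → #T ≤ #T' :=
    fun T' hU hC hD => hmin T' (hitsOdd_of_split hsplit (coe_subset.mpr hU) hC hD)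
  by_cases hpC : HalfPackOdd (fun u v : C => R u v) k
  · -- no odd cycle lies in `D`, so `B` can be traded for `X`
    have := hsmall (T \ B ∪ X)
      (union_subset_union (sdiff_subset_sdiff subset_rfl subset_union_right) subset_rfl)
      ((hT.hitsOddIn_inter C).mono fun v ⟨hvT, hvC⟩ => by
        simp [hvT, Set.disjoint_left.mp hCB hvC])
      (hitsOddIn_of_halfPackOdd_induced hG hpC hCD _)
    have := card_union_le (T \ B) X
    have := card_sdiff_of_subset hB
    have := card_le_card hB
    omega
  by_cases hpD : HalfPackOdd (fun u v : D => R u v) k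
  · -- symmetrically, no odd cycle lies in `C`, so `A` can be traded for `X`
    have := hsmall (T \ A ∪ X)
      (union_subset_union (sdiff_subset_sdiff subset_rfl subset_union_left) subset_rfl)
      (hitsOddIn_of_halfPackOdd_induced hG hpD hCD.symm _)
      ((hT.hitsOddIn_inter D).mono fun v ⟨hvT, hvD⟩ => by
        simp [hvT, Set.disjoint_left.mp hDA hvD])
    have := card_union_le (T \ A) X
    have := card_sdiff_of_subset hA
    have := card_le_card hA
    omega
  -- both sides have small hitting sets, so `A ∪ B` can be traded for `X` and these
  obtain ⟨SC, hSC, hSCt⟩ := exists_finset_hitsOddIn_of_induced (ht C _ hpC)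
  obtain ⟨SD, hSD, hSDt⟩ := exists_finset_hitsOddIn_of_induced (ht D _ hpD)
  have := hsmall (Z ∪ X ∪ (SC ∪ SD)) subset_union_left (hSCt.mono fun v hv => by simp [hv])
    (hSDt.mono fun v hv => by simp [hv])
  have := (card_union_le _ _).trans (add_le_add (card_union_le Z X) (card_union_le SC SD))
  have : #Z = #T - #(A ∪ B) := card_sdiff_of_subset (union_subset hA hB)
  have := card_le_card (union_subset hA hB)
  have := card_union_of_disjoint hAB
  omega

theorem minimum_hitting_set_well_linked_general (R : V → V → Prop) (k t : ℕ)
    (ht : ∀ (W : Type) (R' : W → W → Prop), ¬ HalfPackOdd R' (k - 1) →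
        ∃ S : Set W, S.Finite ∧ S.ncard ≤ t ∧ HitsOdd R' S)
    (hG : ¬ HalfPackOdd R k)
    (T : Finset V) (hT : HitsOdd R (↑T : Set V))
    (hmin : ∀ T' : Finset V, HitsOdd R (↑T' : Set V) → T.card ≤ T'.card) :
    WellLinked R T (2 * t) := by
  classical
  obtain ⟨k, rfl⟩ : ∃ k', k = k' + 1 := by
    refine Nat.exists_eq_add_one.mpr (Nat.pos_of_ne_zero ?_)
    rintro rfl
    exact hG ⟨Fin.elim0, Fin.elim0, fun i => i.elim0, fun v => by simp [Set.eq_empty_of_isEmpty]⟩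
  rw [Nat.add_sub_cancel] at ht
  intro A B hA hB hAB hcard hts
  refine ⟨exLinkage_of_min_hitsOdd ht hG hT hmin hA hB hAB hcard hts, ?_⟩
  rw [Set.union_comm, hcard]
  exact exLinkage_of_min_hitsOdd ht hG hT hmin hB hA hAB.symm hcard.symm (hcard ▸ hts)

/-- If every digraph with no half-integral packing of k−1 directed odd
cycles has a hitting set of size at most t, then in a digraph with no half-integral
packing of k directed odd cycles, every minimum-size hitting set of the directed
odd cycles is 2t-well-linked. -/
theorem minimum_hitting_set_well_linked (R : V → V → Prop) (k t : ℕ) (hk : 2 ≤ k)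
    (ht : ∀ (W : Type) (R' : W → W → Prop), ¬ HalfPackOdd R' (k - 1) →
        ∃ S : Set W, S.Finite ∧ S.ncard ≤ t ∧ HitsOdd R' S)
    (hG : ¬ HalfPackOdd R k)
    (T : Finset V) (hT : HitsOdd R (↑T : Set V))
    (hmin : ∀ T' : Finset V, HitsOdd R (↑T' : Set V) → T.card ≤ T'.card) :
    WellLinked R T (2 * t) :=
  minimum_hitting_set_well_linked_general R k t ht hG T hT hmin
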